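/- Let 𝒩 be a connected plane Euclidean network. Then the following are equivalent: (a) for every pair of diametral vertices u, v of 𝒩_ℓ (vertices with d(u,v) = diam(𝒩_ℓ)), the segment with endpoints u and v is not contained in 𝒩_ℓ; (b) diam(CH(𝒩_ℓ)) < diam(𝒩_ℓ). -/

import Mathlib

open Set
open scoped ENNReal

noncomputable section

attribute [local instance] Classical.propDecidable

/-- Points of the Euclidean plane. -/
abbrev Pt : Type := EuclideanSpace ℝ (Fin 2)

/-- Intrinsic (geodesic) distance inside a set `X ⊆ ℝ²`: the infimum of the lengths
(total variations) of continuous paths from `p` to `q` whose image lies in `X`. -/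
def idist (X : Set Pt) (p q : Pt) : ℝ≥0∞ :=
  ⨅ (γ : ℝ → Pt) (_ : ContinuousOn γ (Set.Icc 0 1)) (_ : γ '' Set.Icc 0 1 ⊆ X)
    (_ : γ 0 = p) (_ : γ 1 = q), eVariationOn γ (Set.Icc 0 1)

/-- Eccentricity of a point within `X`. -/
def ecc (X : Set Pt) (p : Pt) : ℝ≥0∞ := ⨆ q ∈ X, idist X p q

/-- Intrinsic diameter of `X`. -/
def idiam (X : Set Pt) : ℝ≥0∞ := ⨆ p ∈ X, ecc X p

/-- A plane Euclidean network: a finite set of vertices in the plane together with a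
finite set of straight-line edges (recorded as ordered pairs of distinct vertices, each
edge recorded exactly once), such that two distinct edges meet only in common endpoints. -/
structure PlaneNetwork where
  V : Finset Pt
  Edg : Finset (Pt × Pt)
  ends_mem : ∀ e ∈ Edg, e.1 ∈ V ∧ e.2 ∈ V
  ends_ne : ∀ e ∈ Edg, e.1 ≠ e.2
  no_swap : ∀ e ∈ Edg, (e.2, e.1) ∉ Edg
  vertex_cover : ∀ v ∈ V, ∃ e ∈ Edg, v = e.1 ∨ v = e.2
  plane : ∀ e ∈ Edg, ∀ f ∈ Edg, e ≠ f →
    segment ℝ e.1 e.2 ∩ segment ℝ f.1 f.2 ⊆ ({e.1, e.2} ∩ {f.1, f.2} : Set Pt)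

namespace PlaneNetwork

/-- The locus of a network: the union of all its (closed) edges. -/
def locus (N : PlaneNetwork) : Set Pt := ⋃ e ∈ N.Edg, segment ℝ e.1 e.2

/-- A network is connected when its locus is path-connected. -/
def Connected (N : PlaneNetwork) : Prop := IsPathConnected N.locus

/-- `u` and `v` are joined by an edge of the network. -/
def IsEdge (N : PlaneNetwork) (u v : Pt) : Prop := (u, v) ∈ N.Edg ∨ (v, u) ∈ N.Edg

/-- A vertex is pendant if it is an endpoint of exactly one edge. -/
def IsPendantVertex (N : PlaneNetwork) (v : Pt) : Prop :=
  v ∈ N.V ∧ (N.Edg.filter (fun e => e.1 = v ∨ e.2 = v)).card = 1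

/-- The number of pendant vertices of a network. -/
def pendantCount (N : PlaneNetwork) : ℕ := (N.V.filter fun v => N.IsPendantVertex v).card

end PlaneNetwork

/-- The union of a set with all the segments in a list. -/
def insertSegs (X : Set Pt) (L : List (Pt × Pt)) : Set Pt :=
  X ∪ ⋃ s ∈ L, segment ℝ s.1 s.2

/-- The segments of the list are inserted iteratively: the endpoints of the first one lie
on `X`, and the endpoints of each subsequent segment lie on the union of `X` with the
previously inserted segments. -/
def ValidSegs (X : Set Pt) : List (Pt × Pt) → Prop
  | [] => True
  | s :: rest => s.1 ∈ X ∧ s.2 ∈ X ∧ ValidSegs (X ∪ segment ℝ s.1 s.2) rest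

/-- A shortcut set for `X`: a finite sequence of iteratively inserted segments whose
insertion strictly decreases the intrinsic diameter. -/
def IsShortcutSet (X : Set Pt) (L : List (Pt × Pt)) : Prop :=
  ValidSegs X L ∧ idiam (insertSegs X L) < idiam X

/-- `X` admits a shortcut set. -/
def HasShortcutSet (X : Set Pt) : Prop := ∃ L, IsShortcutSet X L

/-- The shortcut number: the minimum size of a shortcut set. -/
def scn (X : Set Pt) : ℕ :=
  sInf {k | ∃ L : List (Pt × Pt), L.length = k ∧ IsShortcutSet X L}

/-!
The convex hull of the locus has the same Euclidean diameter as the vertex set, so it is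
`edist u w` for two vertices `u`, `w`; always `edist ≤ idist ≤ idiam`. If `idiam` does not
exceed `edist u w`, then `u`, `w` are diametral and `idist u w = edist u w`, which in a
closed set forces the segment `[u, w]` into the locus. Conversely, a segment of the
locus between diametral vertices gives `idiam = idist u v ≤ edist u v ≤ diam CH`.
-/

open scoped RealInnerProductSpace
open AffineMap (lineMap lineMap_vsub_left right_vsub_lineMap)

section Geometry

variable {E : Type*} [NormedAddCommGroup E] [InnerProductSpace ℝ E]

lemma dist_sq_eq_dist_sq_add_dist_sq_of_inner_eq_zero {u m x : E} (h : ⟪x - m, m - u⟫ = 0) :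
    dist u x ^ 2 = dist u m ^ 2 + dist m x ^ 2 := by
  have := norm_add_sq_eq_norm_sq_add_norm_sq_real h
  rw [sub_add_sub_cancel] at this
  rw [dist_comm u x, dist_comm u m, dist_comm m x, dist_eq_norm, dist_eq_norm, dist_eq_norm]
  linarith

lemma exists_inner_lineMap_eq_zero {γ : ℝ → E} (hγ : ContinuousOn γ (Icc 0 1)) {u v : E}
    (h0 : γ 0 = u) (h1 : γ 1 = v) {t : ℝ} (ht : t ∈ Icc 0 1) :
    ∃ s ∈ Icc (0 : ℝ) 1, ⟪γ s - lineMap u v t, v - u⟫ = 0 := by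
  have hg : ContinuousOn (fun s => ⟪γ s - lineMap u v t, v - u⟫) (Icc 0 1) :=
    (hγ.sub continuousOn_const).inner continuousOn_const
  have hu : u - lineMap u v t = -(t • (v - u)) := by
    rw [← neg_sub, ← vsub_eq_sub, lineMap_vsub_left, vsub_eq_sub]
  have hv : v - lineMap u v t = (1 - t) • (v - u) := right_vsub_lineMap u v t
  refine intermediate_value_Icc zero_le_one hg ⟨?_, ?_⟩
  · rw [h0, hu, inner_neg_left, real_inner_smul_left, neg_nonpos]
    exact mul_nonneg ht.1 real_inner_self_nonneg
  · rw [h1, hv, real_inner_smul_left]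
    exact mul_nonneg (sub_nonneg.2 ht.2) real_inner_self_nonneg

lemma sqrt_add_sqrt_le_dist_add_dist {u v x : E} {t δ : ℝ}
    (hx : ⟪x - lineMap u v t, v - u⟫ = 0) (hδ : δ ≤ dist x (lineMap u v t)) (hδ₀ : 0 ≤ δ) :
    √(dist u (lineMap u v t) ^ 2 + δ ^ 2) + √(dist (lineMap u v t) v ^ 2 + δ ^ 2)
      ≤ dist u x + dist x v := by
  set m := lineMap u v t
  have hδ2 : δ ^ 2 ≤ dist m x ^ 2 := by rw [dist_comm]; gcongr
  have hu : ⟪x - m, m - u⟫ = 0 := by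
    rw [← vsub_eq_sub m u, lineMap_vsub_left, vsub_eq_sub, real_inner_smul_right, hx, mul_zero]
  have hv : ⟪x - m, m - v⟫ = 0 := by
    rw [← neg_sub v m, ← vsub_eq_sub v m, right_vsub_lineMap, vsub_eq_sub, inner_neg_right,
      real_inner_smul_right, hx, mul_zero, neg_zero]
  gcongr
  · rw [Real.sqrt_le_left dist_nonneg, dist_sq_eq_dist_sq_add_dist_sq_of_inner_eq_zero hu]
    linarith
  · rw [Real.sqrt_le_left dist_nonneg, dist_comm x v,
      dist_sq_eq_dist_sq_add_dist_sq_of_inner_eq_zero hv, dist_comm v m]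
    linarith

lemma dist_lt_sqrt_add_sqrt {u v : E} {t δ : ℝ} (ht : t ∈ Icc 0 1) (hδ : 0 < δ) :
    dist u v < √(dist u (lineMap u v t) ^ 2 + δ ^ 2) + √(dist (lineMap u v t) v ^ 2 + δ ^ 2) := by
  rw [← dist_add_dist_of_mem_segment (segment_eq_image_lineMap ℝ u v ▸ mem_image_of_mem _ ht)]
  refine add_lt_add_of_lt_of_le ?_ ?_
  · rw [Real.lt_sqrt dist_nonneg]; linarith [pow_pos hδ 2]
  · rw [Real.le_sqrt dist_nonneg (by positivity)]; linarith [pow_pos hδ 2]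

lemma eVariationOn_lineMap_le (u v : E) :
    eVariationOn (lineMap u v : ℝ → E) (Icc 0 1) ≤ edist u v := by
  have hlip := ((lipschitzWith_lineMap u v).lipschitzOnWith (s := univ)).comp_eVariationOn_le
    (g := id) (s := Icc (0 : ℝ) 1) (mapsTo_univ _ _)
  have hid : eVariationOn (id : ℝ → ℝ) (Icc 0 1) = 1 := by
    have := (monotoneOn_id (s := univ)).eVariationOn_eq (a := (0 : ℝ)) (b := 1) trivial trivial
    rwa [univ_inter, id, id, sub_zero, ENNReal.ofReal_one] at this
  rwa [hid, mul_one, Function.comp_id, coe_nnreal_ennreal_nndist] at hlip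

end Geometry

lemma edist_add_edist_le_eVariationOn {α F : Type*} [LinearOrder α] [PseudoEMetricSpace F]
    (f : α → F) {a b c : α} (hab : a ≤ b) (hbc : b ≤ c) :
    edist (f a) (f b) + edist (f b) (f c) ≤ eVariationOn f (Icc a c) := by
  have := eVariationOn.Icc_add_Icc f hab hbc (mem_univ b)
  simp only [univ_inter] at this
  rw [← this]
  gcongr
  · exact eVariationOn.edist_le f (left_mem_Icc.2 hab) (right_mem_Icc.2 hab)
  · exact eVariationOn.edist_le f (left_mem_Icc.2 hbc) (right_mem_Icc.2 hbc)

lemma Finset.exists_ediam_eq_edist {α : Type*} [PseudoEMetricSpace α] {s : Finset α}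
    (hs : s.Nonempty) : ∃ x ∈ s, ∃ y ∈ s, Metric.ediam (s : Set α) = edist x y := by
  obtain ⟨⟨x, y⟩, hxy, hmax⟩ := (s ×ˢ s).exists_max_image (fun p => edist p.1 p.2) (hs.product hs)
  rw [Finset.mem_product] at hxy
  refine ⟨x, hxy.1, y, hxy.2, le_antisymm (Metric.ediam_le fun a ha b hb => ?_)
    (Metric.edist_le_ediam_of_mem hxy.1 hxy.2)⟩
  exact hmax (a, b) (Finset.mem_product.2 ⟨ha, hb⟩)

lemma edist_le_idist (X : Set Pt) (p q : Pt) : edist p q ≤ idist X p q := by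
  refine le_iInf₂ fun γ _ => le_iInf₂ fun _ h0 => le_iInf fun h1 => ?_
  rw [← h0, ← h1]
  exact eVariationOn.edist_le γ (left_mem_Icc.2 zero_le_one) (right_mem_Icc.2 zero_le_one)

lemma idist_le_edist_of_segment_subset {X : Set Pt} {u v : Pt} (h : segment ℝ u v ⊆ X) :
    idist X u v ≤ edist u v := by
  refine le_trans ?_ (eVariationOn_lineMap_le u v)
  refine iInf₂_le_of_le _ (lipschitzWith_lineMap u v).continuous.continuousOn ?_
  exact iInf₂_le_of_le (segment_eq_image_lineMap ℝ u v ▸ h) (by simp) (iInf_le _ (by simp))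

lemma idist_le_idiam {X : Set Pt} {p q : Pt} (hp : p ∈ X) (hq : q ∈ X) :
    idist X p q ≤ idiam X :=
  (le_biSup _ hq).trans (le_biSup (ecc X) hp)

/-- In a closed set, only a straight path can realize the Euclidean distance: if the segment
missed a point `m` of `[u, v]`, every path would cross the hyperplane through `m` orthogonal
to `v - u` outside a ball around `m`, which makes it longer than `dist u v` by a fixed amount. -/
lemma segment_subset_of_idist_le_edist {X : Set Pt} (hX : IsClosed X) {u v : Pt}
    (h : idist X u v ≤ edist u v) : segment ℝ u v ⊆ X := by
  rw [segment_eq_image_lineMap]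
  rintro _ ⟨t, ht, rfl⟩
  by_contra hm
  obtain ⟨δ, hδ, hball⟩ := Metric.isOpen_iff.1 hX.isOpen_compl _ hm
  set c := √(dist u (lineMap u v t) ^ 2 + δ ^ 2) + √(dist (lineMap u v t) v ^ 2 + δ ^ 2)
  have hpath : ENNReal.ofReal c ≤ idist X u v := by
    refine le_iInf₂ fun γ hγ => le_iInf₂ fun hγX h0 => le_iInf fun h1 => ?_
    obtain ⟨s, hs, hx⟩ := exists_inner_lineMap_eq_zero hγ h0 h1 ht
    have hδx : δ ≤ dist (γ s) (lineMap u v t) :=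
      not_lt.1 fun hlt => hball (Metric.mem_ball.2 hlt) (hγX (mem_image_of_mem γ hs))
    calc ENNReal.ofReal c ≤ ENNReal.ofReal (dist u (γ s) + dist (γ s) v) :=
          ENNReal.ofReal_le_ofReal (sqrt_add_sqrt_le_dist_add_dist hx hδx hδ.le)
      _ = edist (γ 0) (γ s) + edist (γ s) (γ 1) := by
          rw [h0, h1, ENNReal.ofReal_add dist_nonneg dist_nonneg, edist_dist, edist_dist]
      _ ≤ eVariationOn γ (Icc 0 1) := edist_add_edist_le_eVariationOn γ hs.1 hs.2
  have hc : c ≤ dist u v := by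
    rw [← ENNReal.ofReal_le_ofReal_iff dist_nonneg, ← edist_dist]
    exact hpath.trans h
  exact (dist_lt_sqrt_add_sqrt ht hδ).not_ge hc

namespace PlaneNetwork

variable (N : PlaneNetwork)

lemma vertices_subset_locus : (N.V : Set Pt) ⊆ N.locus := by
  intro v hv
  obtain ⟨e, he, rfl | rfl⟩ := N.vertex_cover v hv
  · exact mem_iUnion₂.2 ⟨e, he, left_mem_segment ℝ e.1 e.2⟩
  · exact mem_iUnion₂.2 ⟨e, he, right_mem_segment ℝ e.1 e.2⟩

lemma isClosed_locus : IsClosed N.locus :=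
  N.Edg.finite_toSet.isClosed_biUnion fun e _ =>
    convexHull_pair (𝕜 := ℝ) e.1 e.2 ▸ ((toFinite _).isCompact_convexHull ℝ).isClosed

lemma convexHull_locus : convexHull ℝ N.locus = convexHull ℝ N.V := by
  refine le_antisymm (convexHull_min (iUnion₂_subset fun e he => ?_) (convex_convexHull ℝ _))
    (convexHull_mono N.vertices_subset_locus)
  have := N.ends_mem e he
  exact segment_subset_convexHull this.1 this.2

variable {N}

lemma Connected.nonempty_vertices (hN : N.Connected) : N.V.Nonempty := by
  obtain ⟨x, hx⟩ := hN.nonempty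
  obtain ⟨e, he, -⟩ := mem_iUnion₂.1 hx
  exact ⟨e.1, (N.ends_mem e he).1⟩

end PlaneNetwork

/-- For a connected plane Euclidean network, no segment joining diametral
vertices is contained in the locus iff the Euclidean diameter of the convex hull of the
locus is strictly smaller than the intrinsic diameter of the locus. -/
theorem stmt1 (N : PlaneNetwork) (hconn : N.Connected) :
    (∀ u ∈ N.V, ∀ v ∈ N.V, idist N.locus u v = idiam N.locus →
        ¬segment ℝ u v ⊆ N.locus) ↔
      EMetric.diam (convexHull ℝ N.locus) < idiam N.locus := by
  change _ ↔ Metric.ediam (convexHull ℝ N.locus) < idiam N.locus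
  have hdiam : Metric.ediam (convexHull ℝ N.locus) = Metric.ediam (N.V : Set Pt) := by
    rw [N.convexHull_locus, convexHull_ediam]
  have hV := N.vertices_subset_locus
  constructor
  · intro h
    obtain ⟨u, hu, w, hw, huw⟩ := Finset.exists_ediam_eq_edist hconn.nonempty_vertices
    rw [hdiam, huw]
    by_contra! hle
    have hdiametral : idist N.locus u w = idiam N.locus :=
      le_antisymm (idist_le_idiam (hV hu) (hV hw)) (hle.trans (edist_le_idist _ _ _))
    exact h u hu w hw hdiametral
      (segment_subset_of_idist_le_edist N.isClosed_locus (hdiametral.trans_le hle))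
  · intro hlt u hu v hv huv hseg
    refine (huv ▸ hlt).not_ge ?_
    calc Metric.ediam (convexHull ℝ N.locus) = Metric.ediam (N.V : Set Pt) := hdiam
      _ ≥ edist u v := Metric.edist_le_ediam_of_mem hu hv
      _ ≥ idist N.locus u v := idist_le_edist_of_segment_subset hseg
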